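/- Let S be a compact metric space equipped with its Borel σ-algebra, H a real Hilbert space, and Φ : S → H a continuous feature map with sup_{s∈S} ‖Φ(s)‖_H ≤ C < ∞. Assume the kernel is universal in the sense that the set of functions {s ↦ ⟪m, Φ(s)⟫_H : m ∈ H} is dense in C(S) with respect to the sup norm. Let ν be a Borel probability measure on S (the law of W), δ_c : S → ℝ a bounded measurable function, and μ = ∫ δ_c(s) Φ(s) dν(s) ∈ H the mean embedding. Then μ = 0 if and only if δ_c = 0 ν-almost everywhere; equivalently, KLCE[k,l,f̂] = ‖μ‖_H = 0 if and only if the model is locally calibrated. -/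
import Mathlib


open MeasureTheory
open scoped RealInnerProductSpace

/-- **Theorem 3.1 + Corollary 3.1 + Lemma 3.1 (KLCE = 0 iff I-trustworthy, under
universality).** Let `S` be a compact metric space, `Φ : S → H` a continuous bounded
feature map into a real Hilbert space whose associated RKHS is universal, i.e. the
functions `s ↦ ⟪m, Φ s⟫` (`m ∈ H`) are dense in `C(S, ℝ)` for the sup norm. Let `ν` be a
Borel probability measure on `S`, `δc : S → ℝ` bounded measurable, and
`μ = ∫ δc(s) Φ(s) dν(s)` the mean embedding. Then `μ = 0` iff `δc = 0` ν-a.e.;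
equivalently, `KLCE = ‖μ‖ = 0` iff the model is locally calibrated. -/
theorem mean_embedding_zero_iff_locally_calibrated
    {S : Type*} [MetricSpace S] [CompactSpace S] [MeasurableSpace S] [BorelSpace S]
    {H : Type*} [NormedAddCommGroup H] [InnerProductSpace ℝ H] [CompleteSpace H]
    (Φ : S → H) (hΦ : Continuous Φ) (C : ℝ) (hC : ∀ s, ‖Φ s‖ ≤ C)
    (huniv : Dense {f : C(S, ℝ) | ∃ m : H, ∀ s, f s = ⟪m, Φ s⟫})
    (ν : Measure S) [IsProbabilityMeasure ν]
    (δc : S → ℝ) (hδ : Measurable δc) (B : ℝ) (hB : ∀ s, |δc s| ≤ B)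
    (μ : H) (hμ : μ = ∫ s, δc s • Φ s ∂ν) :
    (μ = 0 ↔ δc =ᵐ[ν] 0) ∧ (‖μ‖ = 0 ↔ δc =ᵐ[ν] 0) := by
  haveI : Nonempty S := by
    by_contra h
    rw [not_nonempty_iff] at h
    have h1 : ν Set.univ = 1 := measure_univ
    rw [Set.univ_eq_empty_iff.mpr h, measure_empty] at h1
    exact zero_ne_one h1
  have hB0 : 0 ≤ B := le_trans (abs_nonneg _) (hB (Classical.arbitrary S))
  have hδsm : StronglyMeasurable δc := hδ.stronglyMeasurable
  -- integrability of δc • Φ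
  have hint : Integrable (fun s => δc s • Φ s) ν := by
    refine Integrable.mono' (integrable_const (B * C)) ?_ ?_
    · exact (hδ.aemeasurable.aestronglyMeasurable.smul hΦ.aestronglyMeasurable)
    · refine Filter.Eventually.of_forall fun s => ?_
      rw [norm_smul, Real.norm_eq_abs]
      exact mul_le_mul (hB s) (hC s) (norm_nonneg _) hB0
  -- integrability of δc times a bounded continuous function
  have hint_mul : ∀ (g : S → ℝ), Continuous g → Integrable (fun s => δc s * g s) ν := by
    intro g hg
    obtain ⟨D, hD⟩ := (isCompact_univ.image hg).isBounded.subset_closedBall 0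
    have hDg : ∀ s, |g s| ≤ D := fun s => by
      have := hD (Set.mem_image_of_mem g (Set.mem_univ s))
      simpa [Metric.mem_closedBall, Real.dist_eq] using this
    refine Integrable.mono' (integrable_const (B * D)) ?_ ?_
    · exact (hδ.mul hg.measurable).aestronglyMeasurable
    · refine Filter.Eventually.of_forall fun s => ?_
      rw [Real.norm_eq_abs, abs_mul]
      exact mul_le_mul (hB s) (hDg s) (abs_nonneg _) hB0
  have hδint : Integrable δc ν := by
    refine Integrable.mono' (integrable_const B) hδsm.aestronglyMeasurable ?_
    exact Filter.Eventually.of_forall fun s => by rw [Real.norm_eq_abs]; exact hB s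
  have hsqint : Integrable (fun s => δc s * δc s) ν := by
    refine Integrable.mono' (integrable_const (B * B)) ?_ ?_
    · exact (hδ.mul hδ).aestronglyMeasurable
    · refine Filter.Eventually.of_forall fun s => ?_
      rw [Real.norm_eq_abs, abs_mul]
      exact mul_le_mul (hB s) (hB s) (abs_nonneg _) hB0
  -- main forward direction
  have key : μ = 0 → δc =ᵐ[ν] 0 := by
    intro h0
    -- handle case B = 0 once and for all
    rcases eq_or_lt_of_le hB0 with hB0' | hBpos
    · refine Filter.Eventually.of_forall fun s => ?_
      exact abs_eq_zero.mp (le_antisymm (hB0' ▸ hB s) (abs_nonneg _))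
    -- step 1: ∫ δc ⟪m, Φ s⟫ = 0 for all m
    have step1 : ∀ m : H, ∫ s, δc s * ⟪m, Φ s⟫ ∂ν = 0 := by
      intro m
      have := integral_inner (𝕜 := ℝ) hint m
      rw [← hμ, h0, inner_zero_right] at this
      rw [← this]
      refine integral_congr_ae (Filter.Eventually.of_forall fun s => ?_)
      show δc s * ⟪m, Φ s⟫ = ⟪m, δc s • Φ s⟫
      rw [real_inner_smul_right]
    -- step 2: ∫ δc f = 0 for all continuous f
    have step2 : ∀ f : C(S, ℝ), ∫ s, δc s * f s ∂ν = 0 := by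
      intro f
      by_contra hne
      set I := ∫ s, δc s * f s ∂ν with hI
      have hIpos : 0 < |I| := abs_pos.mpr hne
      obtain ⟨g, hgmem, hgdist⟩ := Metric.mem_closure_iff.mp (huniv f)
        (|I| / (2 * B)) (by positivity)
      obtain ⟨m, hm⟩ := hgmem
      have hzero : ∫ s, δc s * g s ∂ν = 0 := by
        rw [← step1 m]
        congr 1; ext s; rw [hm s]
      have hdiff : |I| ≤ |I| / 2 := by
        calc |I| = |∫ s, δc s * f s ∂ν - ∫ s, δc s * g s ∂ν| := by
              rw [hzero, sub_zero]
          _ = |∫ s, (δc s * f s - δc s * g s) ∂ν| := by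
              rw [integral_sub (hint_mul f f.continuous) (hint_mul g g.continuous)]
          _ ≤ ∫ s, |δc s * f s - δc s * g s| ∂ν := by
              simpa [Real.norm_eq_abs] using
                norm_integral_le_integral_norm (fun s => δc s * f s - δc s * g s) (μ := ν)
          _ ≤ ∫ s, B * (|I| / (2 * B)) ∂ν := by
              refine integral_mono_of_nonneg (Filter.Eventually.of_forall fun s => abs_nonneg _)
                (integrable_const _) (Filter.Eventually.of_forall fun s => ?_)
              show |δc s * f s - δc s * g s| ≤ B * (|I| / (2 * B))
              rw [← mul_sub, abs_mul]
              refine mul_le_mul (hB s) ?_ (abs_nonneg _) hB0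
              calc |f s - g s| = dist (f s) (g s) := by rw [Real.dist_eq]
                _ ≤ dist f g := ContinuousMap.dist_apply_le_dist s
                _ ≤ |I| / (2 * B) := le_of_lt hgdist
          _ = B * (|I| / (2 * B)) := by simp
          _ = |I| / 2 := by field_simp
      linarith
    -- step 3: ∫ δc² = 0
    have step3 : ∫ s, δc s * δc s ∂ν = 0 := by
      by_contra hne
      set I := ∫ s, δc s * δc s ∂ν with hI
      have hIpos : 0 < |I| := abs_pos.mpr hne
      obtain ⟨g, hg1, _⟩ := hδint.exists_boundedContinuous_integral_sub_le
        (ε := |I| / (2 * B)) (by positivity)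
      have hgi : Integrable (fun s => g s) ν := by
        refine Integrable.mono' (integrable_const ‖g‖)
          g.continuous.measurable.stronglyMeasurable.aestronglyMeasurable ?_
        exact Filter.Eventually.of_forall fun s => g.norm_coe_le_norm s
      have hnormint : Integrable (fun s => B * ‖δc s - g s‖) ν :=
        ((hδint.sub hgi).norm.const_mul B)
      have hzero : ∫ s, δc s * g s ∂ν = 0 := step2 g.toContinuousMap
      have hdiff : |I| ≤ |I| / 2 := by
        calc |I| = |∫ s, δc s * δc s ∂ν - ∫ s, δc s * g s ∂ν| := by
              rw [hzero, sub_zero]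
          _ = |∫ s, (δc s * δc s - δc s * g s) ∂ν| := by
              rw [integral_sub hsqint (hint_mul g g.continuous)]
          _ ≤ ∫ s, |δc s * δc s - δc s * g s| ∂ν := by
              simpa [Real.norm_eq_abs] using
                norm_integral_le_integral_norm (fun s => δc s * δc s - δc s * g s) (μ := ν)
          _ ≤ ∫ s, B * ‖δc s - g s‖ ∂ν := by
              refine integral_mono_of_nonneg
                (Filter.Eventually.of_forall fun s => abs_nonneg _) hnormint
                (Filter.Eventually.of_forall fun s => ?_)
              show |δc s * δc s - δc s * g s| ≤ B * ‖δc s - g s‖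
              rw [← mul_sub, abs_mul, Real.norm_eq_abs]
              exact mul_le_mul_of_nonneg_right (hB s) (abs_nonneg _)
          _ = B * ∫ s, ‖δc s - g s‖ ∂ν := integral_const_mul B _
          _ ≤ B * (|I| / (2 * B)) := mul_le_mul_of_nonneg_left hg1 hB0
          _ = |I| / 2 := by field_simp
      linarith
    -- conclude δc =ᵐ 0
    have hsq_nonneg : 0 ≤ᵐ[ν] fun s => δc s * δc s :=
      Filter.Eventually.of_forall fun s => mul_self_nonneg _
    have := (integral_eq_zero_iff_of_nonneg_ae hsq_nonneg hsqint).mp step3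
    filter_upwards [this] with s hs
    exact mul_self_eq_zero.mp hs
  have back : δc =ᵐ[ν] 0 → μ = 0 := by
    intro h
    rw [hμ]
    rw [integral_congr_ae (g := fun _ => (0 : H)) ?_, integral_zero]
    filter_upwards [h] with s hs
    simp [hs]
  refine ⟨⟨key, back⟩, ?_⟩
  rw [norm_eq_zero]
  exact ⟨key, back⟩
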